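/- Let B be a deterministic thrifty k-way branching program solving BT^h_2(k), with h ≥ 2 and k ≥ 2. For any input J and any internal node i of T^h, if the computation path of J visits a state q labeled with the thrifty i variable of J, then for each child j of i there is a state occurring earlier than q on the computation path of J that is labeled with the thrifty j variable of J. -/

import Mathlib

/-! Framework: the tree evaluation problem and deterministic k-way branching programs.

The balanced binary tree of height `h` has nodes numbered heap-style `1, …, 2^h - 1`:
the root is node `1` and the children of node `i` are `2i` and `2i+1`.
Elements of `[k] = {1,…,k}` are represented by `Fin k` (the element `1 ∈ [k]`
corresponds to `(0 : Fin k)`). -/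

/-- Node `i` is a leaf of the height-`h` balanced binary tree. -/
def IsLeafNode (h i : ℕ) : Prop := 2 ^ (h - 1) ≤ i ∧ i < 2 ^ h

/-- Node `i` is an internal node of the height-`h` balanced binary tree. -/
def IsInternalNode (h i : ℕ) : Prop := 1 ≤ i ∧ i < 2 ^ (h - 1)

/-- An input to the height-`h` tree evaluation problem over `[k]`: a binary function on `[k]`
for each internal node and a value in `[k]` for each leaf (values at irrelevant indices
are ignored). -/
structure TEInput (h k : ℕ) where
  f : ℕ → Fin k → Fin k → Fin k
  leaf : ℕ → Fin k

/-- Auxiliary recursion (on fuel) computing node values. -/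
def TEInput.valAux {h k : ℕ} (I : TEInput h k) : ℕ → ℕ → Fin k
  | 0, i => I.leaf i
  | m + 1, i =>
      if 2 ^ (h - 1) ≤ i then I.leaf i
      else I.f i (I.valAux m (2 * i)) (I.valAux m (2 * i + 1))

/-- The value `v_i^I` of node `i`: the leaf value if `i` is a leaf, and
`f_i^I (v_{2i}^I, v_{2i+1}^I)` if `i` is an internal node. -/
def TEInput.val {h k : ℕ} (I : TEInput h k) (i : ℕ) : Fin k := I.valAux h i

/-- The input variables of the tree evaluation problem: one variable `f_i(a,b)` for each
internal node `i` and `a b ∈ [k]`, and one variable `l_i` for each leaf `i`. -/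
inductive TEVar (h k : ℕ) where
  | internal (i : ℕ) (hi : IsInternalNode h i) (a b : Fin k) : TEVar h k
  | leaf (i : ℕ) (hi : IsLeafNode h i) : TEVar h k

/-- The value of a variable under an input. -/
def TEInput.evalVar {h k : ℕ} (I : TEInput h k) : TEVar h k → Fin k
  | .internal i _ a b => I.f i a b
  | .leaf i _ => I.leaf i

/-- The node a variable belongs to. -/
def TEVar.node {h k : ℕ} : TEVar h k → ℕ
  | .internal i _ _ _ => i
  | .leaf i _ => i

/-- `X` is the thrifty `i` variable of input `I`: it is `f_i(v_{2i}^I, v_{2i+1}^I)`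
if `i` is an internal node, and `l_i` if `i` is a leaf. -/
def IsThriftyVarOf {h k : ℕ} (I : TEInput h k) (i : ℕ) : TEVar h k → Prop
  | .internal j _ a b => j = i ∧ a = I.val (2 * j) ∧ b = I.val (2 * j + 1)
  | .leaf j _ => j = i

/-- A deterministic `k`-way branching program with variables indexed by `V` and
output set `R`: a set of states (of cardinality `size`), a start state, each state
labeled either with a variable to query (non-output states, with `k` out-edges
labeled `1,…,k`) or with an output value (output sink states). -/
structure DetBP (V : Type) (k : ℕ) (R : Type) where
  size : ℕ
  start : Fin size
  label : Fin size → V ⊕ R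
  next : Fin size → Fin k → Fin size

namespace DetBP

variable {V : Type} {k : ℕ} {R : Type}

/-- One step of computation on input `x`: from a state querying variable `v`, follow
the out-edge labeled `x v`; output states are sinks. -/
def step (B : DetBP V k R) (x : V → Fin k) (s : Fin B.size) : Fin B.size :=
  match B.label s with
  | .inl v => B.next s (x v)
  | .inr _ => s

/-- The state of the computation path of `x` at time `t`. -/
def run (B : DetBP V k R) (x : V → Fin k) (t : ℕ) : Fin B.size :=
  (B.step x)^[t] B.start

/-- The depth of `B` is at most `D`: on every input, the computation path reaches an
output state within its first `D` states. -/
def DepthLE (B : DetBP V k R) (D : ℕ) : Prop :=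
  ∀ x : V → Fin k, ∃ t < D, (B.label (B.run x t)).isRight = true

/-- `B` solves the function tree evaluation problem `FT^h_2(k)`: on every input `I`, the
computation path ends in the output state labeled with the root value `v_1^I`. -/
def SolvesFT {h : ℕ} (B : DetBP (TEVar h k) k (Fin k)) : Prop :=
  ∀ I : TEInput h k, ∃ t, B.label (B.run I.evalVar t) = Sum.inr (I.val 1)

/-- `B` solves the decision tree evaluation problem `BT^h_2(k)`: on every input `I`, the
computation path ends in the output state labeled with whether `v_1^I = 1`
(the element `1 ∈ [k]` being `(0 : Fin k)`). -/
def SolvesBT {h : ℕ} (B : DetBP (TEVar h k) k Bool) : Prop :=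
  ∀ I : TEInput h k, ∃ t, B.label (B.run I.evalVar t) = Sum.inr (decide ((I.val 1 : Fin k).val = 0))

/-- `B` is thrifty: on every input `I`, every query `f_i(a,b)` made along the computation
path of `I` satisfies `a = v_{2i}^I` and `b = v_{2i+1}^I`. -/
def Thrifty {h : ℕ} (B : DetBP (TEVar h k) k R) : Prop :=
  ∀ (I : TEInput h k) (t i : ℕ) (hi : IsInternalNode h i) (a b : Fin k),
    B.label (B.run I.evalVar t) = Sum.inl (TEVar.internal i hi a b) →
    a = I.val (2 * i) ∧ b = I.val (2 * i + 1)

end DetBP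

/-! Suppose the path of `J` reaches the thrifty `i` query at time `t` without having queried
the thrifty `j` variable before. By thriftiness every earlier query is the thrifty variable of
its node, so no earlier query concerns node `j` at all. Resetting `f_j` (or `l_j`) to a constant
`c ≠ v_j^J` therefore yields an input `J'` whose path coincides with that of `J` up to time `t`,
while `v_j^{J'} = c`. The query at time `t` is then `f_i(v_{2i}^J, v_{2i+1}^J)`, which is not
thrifty for `J'`. -/

namespace DetBP

variable {V : Type} {k : ℕ} {R : Type}

lemma run_succ (B : DetBP V k R) (x : V → Fin k) (t : ℕ) :
    B.run x (t + 1) = B.step x (B.run x t) :=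
  Function.iterate_succ_apply' _ _ _

lemma run_eq_of_forall_lt (B : DetBP V k R) {x y : V → Fin k} {t : ℕ}
    (hxy : ∀ s < t, ∀ v, B.label (B.run x s) = Sum.inl v → x v = y v) :
    B.run x t = B.run y t := by
  induction t with
  | zero => rfl
  | succ t ih =>
    rw [run_succ, run_succ, ← ih fun s hs => hxy s (by omega)]
    unfold step
    cases hl : B.label (B.run x t) with
    | inl v => simp only [hxy t (by omega) v hl]
    | inr _ => rfl

lemma Thrifty.isThriftyVarOf_node {h : ℕ} {B : DetBP (TEVar h k) k R} (hB : B.Thrifty)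
    (I : TEInput h k) {s : ℕ} {Y : TEVar h k} (hY : B.label (B.run I.evalVar s) = Sum.inl Y) :
    IsThriftyVarOf I Y.node Y := by
  cases Y with
  | internal m hm a b => exact ⟨rfl, hB I s m hm a b hY⟩
  | leaf m _ => rfl

end DetBP

lemma IsThriftyVarOf.eq_internal {h k : ℕ} {I : TEInput h k} {i : ℕ} (hi : IsInternalNode h i)
    {X : TEVar h k} (hX : IsThriftyVarOf I i X) :
    X = .internal i hi (I.val (2 * i)) (I.val (2 * i + 1)) := by
  cases X with
  | internal m _ a b => obtain ⟨rfl, rfl, rfl⟩ := hX; rfl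
  | leaf m hm => exact absurd hi.2 (hX ▸ hm.1).not_gt

namespace TEInput

variable {h k : ℕ}

def resetNode (I : TEInput h k) (j : ℕ) (c : Fin k) : TEInput h k :=
  ⟨Function.update I.f j fun _ _ => c, Function.update I.leaf j c⟩

lemma val_resetNode_self (I : TEInput h k) (j : ℕ) (c : Fin k) : (I.resetNode j c).val j = c := by
  unfold val
  cases h with
  | zero => simp [valAux, resetNode]
  | succ h => simp only [valAux, resetNode, Function.update_self]; split_ifs <;> rfl

lemma evalVar_resetNode_of_node_ne (I : TEInput h k) {j : ℕ} (c : Fin k) {Y : TEVar h k}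
    (hY : Y.node ≠ j) : (I.resetNode j c).evalVar Y = I.evalVar Y := by
  cases Y with
  | internal m _ a b => exact congrFun (congrFun (Function.update_of_ne hY _ _) a) b
  | leaf m _ => exact Function.update_of_ne hY _ _

end TEInput

lemma DetBP.Thrifty.run_resetNode {h k : ℕ} {R : Type} {B : DetBP (TEVar h k) k R}
    (hB : B.Thrifty) (I : TEInput h k) {j t : ℕ} (c : Fin k)
    (hj : ∀ s < t, ∀ Y, B.label (B.run I.evalVar s) = Sum.inl Y → ¬ IsThriftyVarOf I j Y) :
    B.run (I.resetNode j c).evalVar t = B.run I.evalVar t := by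
  refine (B.run_eq_of_forall_lt fun s hs Y hY => ?_).symm
  have hYj : Y.node ≠ j := fun e => hj s hs Y hY (e ▸ hB.isThriftyVarOf_node I hY)
  exact (I.evalVar_resetNode_of_node_ne c hYj).symm

theorem stmt_8_general (h k : ℕ) (hk : 2 ≤ k) (B : DetBP (TEVar h k) k Bool)
    (hthrifty : B.Thrifty) (J : TEInput h k)
    (i : ℕ) (hi : IsInternalNode h i) :
    ∀ (t : ℕ) (X : TEVar h k),
      B.label (B.run J.evalVar t) = Sum.inl X → IsThriftyVarOf J i X →
      ∀ j : ℕ, j = 2 * i ∨ j = 2 * i + 1 →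
        ∃ s < t, ∃ Y : TEVar h k,
          B.label (B.run J.evalVar s) = Sum.inl Y ∧ IsThriftyVarOf J j Y := by
  intro t X hX hXi j hj
  by_contra! hnone
  have : Nontrivial (Fin k) := Fin.nontrivial_iff_two_le.mpr hk
  obtain ⟨c, hc⟩ := exists_ne (J.val j)
  rw [← hthrifty.run_resetNode J c hnone, hXi.eq_internal hi] at hX
  obtain ⟨hleft, hright⟩ := hthrifty _ t i hi _ _ hX
  rcases hj with rfl | rfl
  · exact hc (hleft.trans (J.val_resetNode_self _ c)).symm
  · exact hc (hright.trans (J.val_resetNode_self _ c)).symm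

/-- Let `B` be a deterministic thrifty `k`-way branching program solving
`BT^h_2(k)` (`h ≥ 2`, `k ≥ 2`). For any input `J` and internal node `i`, if the computation
path of `J` visits a state labeled with the thrifty `i` variable of `J` at time `t`, then
for each child `j` of `i` there is an earlier time `s < t` at which the computation path of
`J` is at a state labeled with the thrifty `j` variable of `J`. -/
theorem stmt_8 (h k : ℕ) (hh : 2 ≤ h) (hk : 2 ≤ k) (B : DetBP (TEVar h k) k Bool)
    (hB : B.SolvesBT) (hthrifty : B.Thrifty) (J : TEInput h k)
    (i : ℕ) (hi : IsInternalNode h i) :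
    ∀ (t : ℕ) (X : TEVar h k),
      B.label (B.run J.evalVar t) = Sum.inl X → IsThriftyVarOf J i X →
      ∀ j : ℕ, j = 2 * i ∨ j = 2 * i + 1 →
        ∃ s < t, ∃ Y : TEVar h k,
          B.label (B.run J.evalVar s) = Sum.inl Y ∧ IsThriftyVarOf J j Y :=
  stmt_8_general h k hk B hthrifty J i hi
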